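/- Let n ≥ 1 and let v = (1, 0, ..., 0, 1) ∈ ℚⁿ. Let M be the n×n chain matrix with diagonal (-1, -2, ..., -2, -3) and off-diagonal neighbors -1. If C ∈ ℚⁿ satisfies M Cᵀ = vᵀ, then C·v = Cᵀ M C = -n + (-1)^n. Consequently the d₃-formula (c² - 3σ - 2χ)/4 + q with σ = -n, χ = n+1, q = 1, c² = -n + (-1)^n evaluates to 3/4 if n is even and 1/4 if n is odd. -/

import Mathlib

/-!
The first and interior rows of `M C = v` force `C i = (-1)^i (C 0 + i)`; the last row then pins
down `C 0`, and `C ⬝ᵥ v = C 0 + C (n-1)`.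
-/

open Matrix

/-- Twisting by `(-1)^i` turns the chain recurrence into `d (k+2) - 2 d (k+1) + d k = 0`,
so the twisted sequence is arithmetic with common difference `-c 0 - c 1 = 1`. -/
theorem eq_neg_one_pow_mul_of_chain_recurrence {R : Type*} [CommRing R] (c : ℕ → R) (N : ℕ)
    (h₀ : -c 0 - c 1 = 1)
    (hrec : ∀ k, k + 2 < N → -c k - 2 * c (k + 1) - c (k + 2) = 0) :
    ∀ i < N, c i = (-1) ^ i * (c 0 + i) := by
  intro i
  induction i using Nat.twoStepInduction with
  | zero => simp
  | one => intro; push_cast; linear_combination -h₀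
  | more k ih₀ ih₁ =>
    intro hk
    have hrow := hrec k hk
    rw [ih₀ (by omega), ih₁ (by omega)] at hrow
    push_cast at hrow ⊢
    linear_combination -hrow

theorem first_add_last_eq_of_chain_recurrence {K : Type*} [Field K] [CharZero K]
    (c : ℕ → K) (n : ℕ) (hn : 2 ≤ n) (h₀ : -c 0 - c 1 = 1)
    (hrec : ∀ k, k + 2 < n → -c k - 2 * c (k + 1) - c (k + 2) = 0)
    (hlast : -c (n - 2) - 3 * c (n - 1) = 1) :
    c 0 + c (n - 1) = -(n : K) + (-1) ^ n := by
  obtain ⟨m, rfl⟩ := Nat.exists_eq_add_of_le' hn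
  have hsol := eq_neg_one_pow_mul_of_chain_recurrence c (m + 2) h₀ hrec
  simp only [Nat.add_sub_cancel, show m + 2 - 1 = m + 1 by omega] at hlast ⊢
  rw [hsol m (by omega), hsol (m + 1) (by omega)] at hlast
  rw [hsol (m + 1) (by omega)]
  push_cast at hlast ⊢
  have hsq : ((-1 : K) ^ m) ^ 2 = 1 := by rw [← pow_mul, mul_comm, pow_mul, neg_one_sq, one_pow]
  have hc₀ : 2 * c 0 = (-1) ^ m - 2 * m - 3 := by
    linear_combination (-1) ^ m * hlast - (2 * c 0 + 2 * m + 3) * hsq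
  linear_combination (1 / 2 - (-1) ^ m / 2) * hc₀ - (1 / 2) * hsq

theorem d3_formula_eq_ite_even (n : ℕ) :
    ((-(n : ℚ) + (-1) ^ n) - 3 * (-(n : ℚ)) - 2 * ((n : ℚ) + 1)) / 4 + 1 =
      if Even n then (3 : ℚ) / 4 else 1 / 4 := by
  rcases Nat.even_or_odd n with he | ho
  · rw [if_pos he, he.neg_one_pow]; ring
  · rw [if_neg (Nat.not_even_iff_odd.mpr ho), ho.neg_one_pow]; ring

theorem dotProduct_eq_add_of_eq_ite_first_or_last {R : Type*} [Semiring R] {n : ℕ}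
    (hn : 2 ≤ n) (C v : Fin n → R)
    (hv : ∀ i : Fin n, v i = if (i : ℕ) = 0 ∨ (i : ℕ) = n - 1 then 1 else 0) :
    C ⬝ᵥ v = C ⟨0, by omega⟩ + C ⟨n - 1, by omega⟩ := by
  have hv' : v = Pi.single ⟨0, by omega⟩ 1 + Pi.single ⟨n - 1, by omega⟩ 1 := by
    funext i
    rw [hv]
    simp only [Pi.add_apply, Pi.single_apply, Fin.ext_iff]
    split_ifs <;> first | omega | simp
  rw [hv', dotProduct_add, dotProduct_single, dotProduct_single, mul_one, mul_one]

section Tridiagonal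

variable {R : Type*} [CommRing R] {n : ℕ} {M : Matrix (Fin n) (Fin n) R}
  (hzero : ∀ i j : Fin n, (i : ℕ) ≠ (j : ℕ) → (i : ℕ) + 1 ≠ (j : ℕ) →
    (j : ℕ) + 1 ≠ (i : ℕ) → M i j = 0)
  (C : Fin n → R)
include hzero

theorem mulVec_apply_eq_sum_of_tridiagonal (i : Fin n) (s : Finset (Fin n))
    (hs : ∀ j : Fin n, (j : ℕ) = i ∨ (j : ℕ) + 1 = i ∨ (i : ℕ) + 1 = j → j ∈ s) :
    (M *ᵥ C) i = ∑ j ∈ s, M i j * C j := by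
  refine (Finset.sum_subset s.subset_univ fun j _ hj => ?_).symm
  change M i j * C j = 0
  rw [hzero i j (fun h => hj (hs j (by omega))) (fun h => hj (hs j (by omega)))
    (fun h => hj (hs j (by omega))), zero_mul]

theorem mulVec_apply_zero_of_tridiagonal (hn : 2 ≤ n) :
    (M *ᵥ C) ⟨0, by omega⟩ = M ⟨0, by omega⟩ ⟨0, by omega⟩ * C ⟨0, by omega⟩ +
      M ⟨0, by omega⟩ ⟨1, hn⟩ * C ⟨1, hn⟩ := by
  rw [mulVec_apply_eq_sum_of_tridiagonal hzero C _ {⟨0, by omega⟩, ⟨1, hn⟩}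
      (fun j hj => by
        simp only [Finset.mem_insert, Finset.mem_singleton, Fin.ext_iff] at hj ⊢; omega),
    Finset.sum_pair (by simp [Fin.ext_iff])]

theorem mulVec_apply_succ_of_tridiagonal {k : ℕ} (hk : k + 2 < n) :
    (M *ᵥ C) ⟨k + 1, by omega⟩ =
      M ⟨k + 1, by omega⟩ ⟨k, by omega⟩ * C ⟨k, by omega⟩ +
      (M ⟨k + 1, by omega⟩ ⟨k + 1, by omega⟩ * C ⟨k + 1, by omega⟩ +
      M ⟨k + 1, by omega⟩ ⟨k + 2, hk⟩ * C ⟨k + 2, hk⟩) := by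
  rw [mulVec_apply_eq_sum_of_tridiagonal hzero C _
      {⟨k, by omega⟩, ⟨k + 1, by omega⟩, ⟨k + 2, hk⟩}
      (fun j hj => by
        simp only [Finset.mem_insert, Finset.mem_singleton, Fin.ext_iff] at hj ⊢; omega),
    Finset.sum_insert (by simp [Fin.ext_iff]), Finset.sum_pair (by simp [Fin.ext_iff])]

theorem mulVec_apply_last_of_tridiagonal (hn : 2 ≤ n) :
    (M *ᵥ C) ⟨n - 1, by omega⟩ =
      M ⟨n - 1, by omega⟩ ⟨n - 2, by omega⟩ * C ⟨n - 2, by omega⟩ +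
      M ⟨n - 1, by omega⟩ ⟨n - 1, by omega⟩ * C ⟨n - 1, by omega⟩ := by
  rw [mulVec_apply_eq_sum_of_tridiagonal hzero C _ {⟨n - 2, by omega⟩, ⟨n - 1, by omega⟩}
      (fun j hj => by
        simp only [Finset.mem_insert, Finset.mem_singleton, Fin.ext_iff] at hj ⊢; omega),
    Finset.sum_pair (by simp [Fin.ext_iff]; omega)]

end Tridiagonal

/-- For the n×n chain matrix M with diagonal (-1, -2, ..., -2, -3) and
v = (1, 0, ..., 0, 1): any C with M·C = v satisfies C·v = -n + (-1)^n, and the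
d₃-formula (c² - 3σ - 2χ)/4 + q with σ = -n, χ = n+1, q = 1, c² = -n + (-1)^n
evaluates to 3/4 for n even and 1/4 for n odd. -/
theorem stmt12 (n : ℕ) (hn : 1 ≤ n) (M : Matrix (Fin n) (Fin n) ℚ)
    (hfirst : M ⟨0, by omega⟩ ⟨0, by omega⟩ = -1)
    (hdiag : ∀ i : Fin n, 1 ≤ (i : ℕ) → (i : ℕ) ≤ n - 2 → M i i = -2)
    (hlast : M ⟨n - 1, by omega⟩ ⟨n - 1, by omega⟩ = -3)
    (hoff : ∀ i j : Fin n, (i : ℕ) + 1 = (j : ℕ) → M i j = -1 ∧ M j i = -1)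
    (hzero : ∀ i j : Fin n, (i : ℕ) ≠ (j : ℕ) → (i : ℕ) + 1 ≠ (j : ℕ) →
      (j : ℕ) + 1 ≠ (i : ℕ) → M i j = 0)
    (v : Fin n → ℚ)
    (hv : ∀ i : Fin n, v i = if (i : ℕ) = 0 ∨ (i : ℕ) = n - 1 then 1 else 0)
    (C : Fin n → ℚ) (hC : M.mulVec C = v) :
    dotProduct C v = -(n : ℚ) + (-1) ^ n ∧
    (((-(n : ℚ) + (-1) ^ n) - 3 * (-(n : ℚ)) - 2 * ((n : ℚ) + 1)) / 4 + 1 =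
      if Even n then (3 : ℚ) / 4 else 1 / 4) := by
  refine ⟨?_, d3_formula_eq_ite_even n⟩
  have hn2 : 2 ≤ n := by
    by_contra h
    obtain rfl : n = 1 := by omega
    exact absurd (hfirst.symm.trans hlast) (by norm_num)
  set c : ℕ → ℚ := fun i => if h : i < n then C ⟨i, h⟩ else 0
  have hc : ∀ i (h : i < n), C ⟨i, h⟩ = c i := fun i h => by simp [c, h]
  have h₀ : -c 0 - c 1 = 1 := by
    have hrow := congrFun hC ⟨0, by omega⟩
    rw [mulVec_apply_zero_of_tridiagonal hzero C hn2, hfirst, (hoff _ _ rfl).1, hv,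
      if_pos (Or.inl rfl), hc, hc] at hrow
    linarith
  have hrec : ∀ k, k + 2 < n → -c k - 2 * c (k + 1) - c (k + 2) = 0 := by
    intro k hk
    have hrow := congrFun hC ⟨k + 1, by omega⟩
    rw [mulVec_apply_succ_of_tridiagonal hzero C hk, (hoff ⟨k, by omega⟩ _ rfl).2,
      hdiag _ (by simp) (by simp; omega), (hoff _ ⟨k + 2, hk⟩ rfl).1, hv,
      if_neg (by simp; omega), hc, hc, hc] at hrow
    linarith
  have hlast' : -c (n - 2) - 3 * c (n - 1) = 1 := by
    have hrow := congrFun hC ⟨n - 1, by omega⟩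
    rw [mulVec_apply_last_of_tridiagonal hzero C hn2, hlast,
      (hoff ⟨n - 2, by omega⟩ _ (by simp; omega)).2, hv, if_pos (Or.inr rfl), hc, hc] at hrow
    linarith
  rw [dotProduct_eq_add_of_eq_ite_first_or_last hn2 C v hv, hc, hc]
  exact first_add_last_eq_of_chain_recurrence c n hn2 h₀ hrec hlast'
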